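/- arXiv:1107.2552 — 6 statements merged into one kernel-verified Lean document; each statement's English description precedes it below -/
import Mathlib

section
/- Let s, m be positive integers with max{s,m} ≥ 2 and let p = min{s,m}. Then there is a constant C such that for all integers n ≥ 1, ∑_{k ∈ ℤ, k ≠ 0, k ≠ −2n} 1/(|k|^s · |2n−k|^m) ≤ C/n^p. -/
/-!
Write `q = max s m`, `p = min s m`. Since `|k| + |2n - k| ≥ 2n`, the larger of `|k|`, `|2n - k|`
is at least `n`, so each term is at most `(|k|^{-q} + |2n - k|^{-q}) / n^p`. Both series
`∑ |k|^{-q}` and `∑ |2n - k|^{-q}` equal the same constant because `q ≥ 2`.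
-/

open Real

lemma pow_max_mul_pow_min_le_pow_mul_pow {a b c : ℝ} (s m : ℕ) (ha : 0 ≤ a) (hab : a ≤ b)
    (hc : 0 ≤ c) (hcb : c ≤ b) : a ^ max s m * c ^ min s m ≤ a ^ s * b ^ m := by
  have hb : 0 ≤ b := ha.trans hab
  rcases le_total s m with h | h
  · rw [max_eq_right h, min_eq_left h]
    calc a ^ m * c ^ s = a ^ s * (a ^ (m - s) * c ^ s) := by
          rw [← mul_assoc, ← pow_add, Nat.add_sub_cancel' h]
      _ ≤ a ^ s * (b ^ (m - s) * b ^ s) := by gcongr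
      _ = a ^ s * b ^ m := by rw [← pow_add, Nat.sub_add_cancel h]
  · rw [max_eq_left h, min_eq_right h]
    gcongr

lemma one_div_pow_mul_pow_le {a b c : ℝ} (s m : ℕ) (ha : 0 < a) (hb : 0 < b) (hc : 0 < c)
    (habc : 2 * c ≤ a + b) :
    1 / (a ^ s * b ^ m) ≤ (1 / a ^ max s m + 1 / b ^ max s m) / c ^ min s m := by
  rcases le_total a b with h | h
  · calc 1 / (a ^ s * b ^ m) ≤ 1 / (a ^ max s m * c ^ min s m) :=
          one_div_le_one_div_of_le (by positivity)
            (pow_max_mul_pow_min_le_pow_mul_pow s m ha.le h hc.le (by linarith))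
      _ ≤ (1 / a ^ max s m + 1 / b ^ max s m) / c ^ min s m := by
          rw [← div_div]
          gcongr
          exact le_add_of_nonneg_right (by positivity)
  · calc 1 / (a ^ s * b ^ m) ≤ 1 / (b ^ max s m * c ^ min s m) := by
          refine one_div_le_one_div_of_le (by positivity) ?_
          rw [mul_comm (a ^ s), max_comm, min_comm]
          exact pow_max_mul_pow_min_le_pow_mul_pow m s hb.le h hc.le (by linarith)
      _ ≤ (1 / a ^ max s m + 1 / b ^ max s m) / c ^ min s m := by
          rw [← div_div]
          gcongr
          exact le_add_of_nonneg_left (by positivity)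

lemma summable_one_div_abs_int_pow {q : ℕ} (hq : 1 < q) :
    Summable fun k : ℤ ↦ 1 / |(k : ℝ)| ^ q := by
  simpa only [abs_div, abs_one, abs_pow] using (summable_one_div_int_pow.mpr hq).abs

lemma one_div_abs_pow_mul_abs_sub_pow_le (s m : ℕ) (hm : 1 ≤ m) {n : ℕ} (hn : 1 ≤ n) {k : ℤ}
    (hk : k ≠ 0) :
    1 / (|(k : ℝ)| ^ s * |2 * (n : ℝ) - k| ^ m) ≤
      (1 / |(k : ℝ)| ^ max s m + 1 / |((2 * n - k : ℤ) : ℝ)| ^ max s m) / (n : ℝ) ^ min s m := by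
  rcases eq_or_ne k (2 * n) with rfl | hk2
  · -- the term at `k = 2n` is the junk value `1 / 0 = 0`
    rw [sub_eq_zero.mpr (by push_cast; rfl), abs_zero, zero_pow (by omega), mul_zero, div_zero]
    positivity
  · have hsum : 2 * (n : ℝ) ≤ |(k : ℝ)| + |2 * (n : ℝ) - k| := by
      linarith [le_abs_self (k : ℝ), le_abs_self (2 * (n : ℝ) - k)]
    have h2k : 2 * (n : ℝ) - k ≠ 0 := by exact_mod_cast sub_ne_zero.mpr hk2.symm
    push_cast
    exact one_div_pow_mul_pow_le s m (by positivity) (abs_pos.mpr h2k) (by exact_mod_cast hn) hsum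

theorem stmt_1_general (s m : ℕ) (hm : 1 ≤ m) (hmax : 2 ≤ max s m) :
    ∃ C : ℝ, ∀ n : ℕ, 1 ≤ n →
      (∑' k : ℤ, if k ≠ 0 ∧ k ≠ -(2 * (n : ℤ)) then
          1 / (|(k : ℝ)| ^ s * |2 * (n : ℝ) - (k : ℝ)| ^ m) else 0)
        ≤ C / (n : ℝ) ^ (min s m) := by
  set w : ℤ → ℝ := fun k ↦ 1 / |(k : ℝ)| ^ max s m
  have hw : Summable w := summable_one_div_abs_int_pow hmax
  refine ⟨2 * ∑' k, w k, fun n hn ↦ ?_⟩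
  have hw' : Summable fun k ↦ w (2 * n - k) := hw.comp_injective sub_right_injective
  have hw_shift : ∑' k, w (2 * n - k) = ∑' k, w k := (Equiv.subLeft (2 * (n : ℤ))).tsum_eq w
  have hG : Summable fun k ↦ (w k + w (2 * n - k)) / (n : ℝ) ^ min s m :=
    (hw.add hw').div_const _
  have hbound : ∀ k : ℤ, (if k ≠ 0 ∧ k ≠ -(2 * (n : ℤ)) then
      1 / (|(k : ℝ)| ^ s * |2 * (n : ℝ) - (k : ℝ)| ^ m) else 0) ≤
        (w k + w (2 * n - k)) / (n : ℝ) ^ min s m := fun k ↦ by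
    split_ifs with hk
    · exact one_div_abs_pow_mul_abs_sub_pow_le s m hm hn hk.1
    · positivity
  calc _ ≤ ∑' k, (w k + w (2 * n - k)) / (n : ℝ) ^ min s m :=
        (hG.of_nonneg_of_le (fun k ↦ by split_ifs <;> positivity) hbound).tsum_le_tsum hbound hG
    _ = (2 * ∑' k, w k) / (n : ℝ) ^ min s m := by
        rw [tsum_div_const, hw.tsum_add hw', hw_shift, two_mul]

/-- Equality (60): for positive integers s, m with max{s,m} ≥ 2 and p = min{s,m},
∑_{k ≠ 0, −2n} 1/(|k|^s·|2n−k|^m) = O(1/n^p). -/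
theorem stmt_1 (s m : ℕ) (hs : 1 ≤ s) (hm : 1 ≤ m) (hmax : 2 ≤ max s m) :
    ∃ C : ℝ, ∀ n : ℕ, 1 ≤ n →
      (∑' k : ℤ, if k ≠ 0 ∧ k ≠ -(2 * (n : ℤ)) then
          1 / (|(k : ℝ)| ^ s * |2 * (n : ℝ) - (k : ℝ)| ^ m) else 0)
        ≤ C / (n : ℝ) ^ (min s m) :=
  stmt_1_general s m hm hmax
end

section
/- Let ρ ∈ (0, 1/10) be fixed and t ∈ [0, ρ]. Then for every point ξ = 2πn + t + 3ρe^{iα} with α ∈ (−π, π] (i.e., ξ on the circle of radius 3ρ centered at 2πn + t), one has |2cos ξ − 2cos t| > 2ρ², provided ρ is sufficiently small. -/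
/-!
Write `ξ = 2πn + t + w` with `‖w‖ = 3ρ`. By periodicity and the sum-to-product formula,
`2 cos ξ - 2 cos t = -4 sin (t + w/2) sin (w/2)`. Both arguments are small but bounded away
from `0`: `‖w/2‖ = 3ρ/2` and `‖t + w/2‖ ≥ ρ/2`. Near the origin `|sin z|` is comparable to `|z|`
(`|sin z|² ≥ |z|²(1 - |z|²/3)`, from `|sin (x + iy)|² = sin² x + sinh² y`), so the product is
at least about `4 · (3ρ/2) · (ρ/2) = 3ρ² > 2ρ²`.
-/

open Real Complex

theorem Real.sq_mul_one_sub_sq_div_three_le_sin_sq (x : ℝ) :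
    x ^ 2 * (1 - x ^ 2 / 3) ≤ Real.sin x ^ 2 := by
  by_cases hx : x ^ 2 ≤ 3
  · have hsin : |x| - |x| ^ 3 / 6 ≤ |Real.sin x| := by
      have := Real.abs_sub_sin_le x
      have := abs_sub_abs_le_abs_sub x (Real.sin x)
      linarith
    have hpos : 0 ≤ |x| - |x| ^ 3 / 6 := by
      have : |x| ^ 2 ≤ 3 := by rwa [sq_abs]
      nlinarith [abs_nonneg x]
    calc x ^ 2 * (1 - x ^ 2 / 3) ≤ (|x| - |x| ^ 3 / 6) ^ 2 := by
          nlinarith [sq_abs x, sq_nonneg (|x| ^ 3)]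
      _ ≤ |Real.sin x| ^ 2 := pow_le_pow_left₀ hpos hsin 2
      _ = Real.sin x ^ 2 := sq_abs _
  · nlinarith [sq_nonneg x, sq_nonneg (Real.sin x)]

theorem Real.sq_le_sinh_sq (y : ℝ) : y ^ 2 ≤ Real.sinh y ^ 2 :=
  sq_le_sq.2 <| by rw [Real.abs_sinh]; exact Real.self_le_sinh_iff.2 (abs_nonneg y)

theorem Complex.sq_norm_sin (z : ℂ) :
    ‖Complex.sin z‖ ^ 2 = Real.sin z.re ^ 2 + Real.sinh z.im ^ 2 := by
  have h : Complex.sin z = ((Real.sin z.re * Real.cosh z.im : ℝ) : ℂ)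
      + ((Real.cos z.re * Real.sinh z.im : ℝ) : ℂ) * I := by
    conv_lhs => rw [← Complex.re_add_im z]
    rw [Complex.sin_add_mul_I]
    push_cast [Complex.ofReal_sin, Complex.ofReal_cos, Complex.ofReal_sinh, Complex.ofReal_cosh]
    ring
  rw [h, Complex.sq_norm, Complex.normSq_add_mul_I]
  nlinarith [Real.sin_sq_add_cos_sq z.re, Real.cosh_sq z.im]

theorem Complex.sq_norm_mul_one_sub_le_sq_norm_sin (z : ℂ) :
    ‖z‖ ^ 2 * (1 - ‖z‖ ^ 2 / 3) ≤ ‖Complex.sin z‖ ^ 2 := by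
  have hz : ‖z‖ ^ 2 = z.re ^ 2 + z.im ^ 2 := by
    rw [Complex.sq_norm, Complex.normSq_apply]; ring
  rw [Complex.sq_norm_sin, hz]
  nlinarith [Real.sq_mul_one_sub_sq_div_three_le_sin_sq z.re, Real.sq_le_sinh_sq z.im,
    sq_nonneg z.re, sq_nonneg z.im, mul_nonneg (sq_nonneg z.re) (sq_nonneg z.im)]

theorem Complex.sq_norm_le_sq_norm_sin_of_norm_le {z : ℂ} (hz : ‖z‖ ≤ 1 / 2) :
    11 / 12 * ‖z‖ ^ 2 ≤ ‖Complex.sin z‖ ^ 2 := by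
  have : ‖z‖ ^ 2 ≤ 1 / 4 := by nlinarith [norm_nonneg z]
  nlinarith [Complex.sq_norm_mul_one_sub_le_sq_norm_sin z, sq_nonneg ‖z‖]

theorem Complex.two_cos_add_sub_two_cos (t w : ℂ) :
    2 * Complex.cos (t + w) - 2 * Complex.cos t
      = -4 * Complex.sin (t + w / 2) * Complex.sin (w / 2) := by
  rw [← mul_sub, Complex.cos_sub_cos]
  ring_nf

theorem Complex.two_mul_sq_lt_norm_two_cos_add_sub_two_cos {ρ : ℝ} (hρ : 0 < ρ)
    (hρ₀ : ρ ≤ 1 / 10) {t w : ℂ} (ht : ‖t‖ ≤ ρ) (hw : ‖w‖ = 3 * ρ) :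
    2 * ρ ^ 2 < ‖2 * Complex.cos (t + w) - 2 * Complex.cos t‖ := by
  have hw₂ : ‖w / 2‖ = 3 * ρ / 2 := by rw [norm_div, hw, Complex.norm_two]
  have hlow : ρ / 2 ≤ ‖t + w / 2‖ := by
    have := norm_sub_le (t + w / 2) t
    rw [add_sub_cancel_left] at this
    linarith
  have hup : ‖t + w / 2‖ ≤ 1 / 2 := by
    have := norm_add_le t (w / 2)
    linarith
  have hsin_half : 33 / 16 * ρ ^ 2 ≤ ‖Complex.sin (w / 2)‖ ^ 2 := by
    have := Complex.sq_norm_le_sq_norm_sin_of_norm_le (z := w / 2) (by linarith)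
    rw [hw₂] at this
    linarith
  have hsin_add : 11 / 48 * ρ ^ 2 ≤ ‖Complex.sin (t + w / 2)‖ ^ 2 := by
    nlinarith [Complex.sq_norm_le_sq_norm_sin_of_norm_le hup]
  rw [Complex.two_cos_add_sub_two_cos, norm_mul, norm_mul, norm_neg,
    show ‖(4 : ℂ)‖ = 4 by norm_num]
  refine lt_of_pow_lt_pow_left₀ 2 (by positivity) ?_
  have hprod := mul_le_mul hsin_add hsin_half (by positivity) (sq_nonneg _)
  nlinarith [pow_pos hρ 4]

/-- Inequality (16): for sufficiently small ρ ∈ (0, 1/10), t ∈ [0, ρ], any integer n and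
any point ξ = 2πn + t + 3ρe^{iα} on the circle of radius 3ρ centered at 2πn + t,
one has |2cos ξ − 2cos t| > 2ρ². -/
theorem stmt_2 :
    ∃ ρ₀ : ℝ, 0 < ρ₀ ∧ ρ₀ ≤ 1 / 10 ∧
      ∀ ρ : ℝ, 0 < ρ → ρ < ρ₀ →
        ∀ t : ℝ, 0 ≤ t → t ≤ ρ →
          ∀ n : ℤ, ∀ α : ℝ, -π < α → α ≤ π →
            2 * ρ ^ 2 <
              ‖(2 * Complex.cos (((2 * π * (n : ℝ) + t : ℝ) : ℂ)
                  + 3 * (ρ : ℂ) * Complex.exp (Complex.I * (α : ℂ)))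
                - 2 * Complex.cos ((t : ℝ) : ℂ))‖ := by
  refine ⟨1 / 10, by norm_num, le_rfl, fun ρ hρ hρ₀ t ht₀ htρ n α _ _ => ?_⟩
  have hξ : ((2 * π * (n : ℝ) + t : ℝ) : ℂ) + 3 * (ρ : ℂ) * Complex.exp (Complex.I * (α : ℂ))
      = ((t : ℂ) + 3 * (ρ : ℂ) * Complex.exp (Complex.I * (α : ℂ))) + n * (2 * π) := by
    push_cast; ring
  rw [hξ, Complex.cos_add_int_mul_two_pi]
  refine Complex.two_mul_sq_lt_norm_two_cos_add_sub_two_cos hρ hρ₀.le ?_ ?_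
  · rwa [Complex.norm_real, Real.norm_of_nonneg ht₀]
  · rw [norm_mul, Complex.norm_exp_I_mul_ofReal, norm_mul, Complex.norm_real,
      Real.norm_of_nonneg hρ.le]
    norm_num
end

section
/- Fix t ∈ [0, π]. The equation cos ξ = cos t has exactly 2 complex roots (counted with multiplicity) inside the circle {ξ ∈ ℂ : |ξ − (2πn + t)| = 3ρ} for each integer n ≥ 1, provided 0 < ρ < π/4 and 0 ≤ t ≤ ρ. -/
/-!
Since `cos` is `2π`-periodic, with `w = ξ - 2πn` the product formula gives
`cos ξ - cos t = -2 sin ((w - t) / 2) sin ((w + t) / 2)`. The entire function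
`sin (w / 2) / w` vanishes nowhere on `‖w‖ < 2π`, and both `w - t = ξ - (2πn + t)` and
`w + t = ξ - (2πn - t)` stay in that disk, so the two linear factors carry all the zeros.
-/

open Real Complex

/-- The entire function `sin (w / 2) / w`, with value `1 / 2` at `w = 0`. -/
noncomputable def sinHalfDiv : ℂ → ℂ := dslope (fun w => Complex.sin (w / 2)) 0

lemma sin_half_eq_mul_sinHalfDiv (w : ℂ) : Complex.sin (w / 2) = w * sinHalfDiv w := by
  have h := sub_smul_dslope (fun w => Complex.sin (w / 2)) 0 w
  simp only [sub_zero, smul_eq_mul, zero_div, Complex.sin_zero] at h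
  exact h.symm

@[fun_prop]
lemma differentiable_sinHalfDiv : Differentiable ℂ sinHalfDiv := by
  rw [← differentiableOn_univ, sinHalfDiv, differentiableOn_dslope Filter.univ_mem,
    differentiableOn_univ]
  fun_prop

lemma eq_zero_of_sin_half_eq_zero {w : ℂ} (hw : ‖w‖ < 2 * π) (h : Complex.sin (w / 2) = 0) :
    w = 0 := by
  obtain ⟨k, hk⟩ := Complex.sin_eq_zero_iff.mp h
  have hw_eq : w = ((2 * k * π : ℝ) : ℂ) := by push_cast; linear_combination 2 * hk
  have hk0 : |(k : ℝ)| < 1 := by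
    rw [hw_eq, Complex.norm_real, Real.norm_eq_abs, abs_mul, abs_mul,
      abs_of_pos Real.pi_pos, abs_two] at hw
    nlinarith [Real.pi_pos]
  have hk_zero : k = 0 := by
    rw [← Int.cast_abs] at hk0
    exact Int.abs_lt_one_iff.mp (by exact_mod_cast hk0)
  simp [hw_eq, hk_zero]

lemma sinHalfDiv_ne_zero {w : ℂ} (hw : ‖w‖ < 2 * π) : sinHalfDiv w ≠ 0 := by
  rcases eq_or_ne w 0 with rfl | hw0
  · have hderiv : HasDerivAt (fun w => Complex.sin (w / 2)) (1 / 2) 0 := by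
      simpa using ((hasDerivAt_id (0 : ℂ)).div_const 2).csin
    simp [sinHalfDiv, dslope_same, hderiv.deriv]
  · intro h
    exact hw0 (eq_zero_of_sin_half_eq_zero hw (by rw [sin_half_eq_mul_sinHalfDiv, h, mul_zero]))

lemma cos_sub_cos_eq_mul_sinHalfDiv (w t : ℂ) :
    Complex.cos w - Complex.cos t =
      (w - t) * (w + t) * (-2 * sinHalfDiv (w - t) * sinHalfDiv (w + t)) := by
  rw [Complex.cos_sub_cos, add_comm w t, sin_half_eq_mul_sinHalfDiv, sin_half_eq_mul_sinHalfDiv,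
    add_comm t w]
  ring

theorem stmt_3_general (ρ t : ℝ) (hρ0 : 0 < ρ) (hρ : ρ < π / 4) (ht0 : 0 ≤ t) (htρ : t ≤ ρ)
    (n : ℕ) :
    ∃ z₁ z₂ : ℂ, ∃ g : ℂ → ℂ,
      ‖z₁ - ((2 * π * (n : ℝ) + t : ℝ) : ℂ)‖ < 3 * ρ ∧
      ‖z₂ - ((2 * π * (n : ℝ) + t : ℝ) : ℂ)‖ < 3 * ρ ∧
      AnalyticOnNhd ℂ g {ξ : ℂ | ‖ξ - ((2 * π * (n : ℝ) + t : ℝ) : ℂ)‖ < 3 * ρ} ∧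
      ∀ ξ : ℂ, ‖ξ - ((2 * π * (n : ℝ) + t : ℝ) : ℂ)‖ < 3 * ρ →
        g ξ ≠ 0 ∧
        Complex.cos ξ - Complex.cos ((t : ℝ) : ℂ) = (ξ - z₁) * (ξ - z₂) * g ξ := by
  set a : ℂ := (n : ℂ) * (2 * π)
  set g : ℂ → ℂ := fun ξ => -2 * sinHalfDiv (ξ - a - t) * sinHalfDiv (ξ - a + t)
  have hc : ((2 * π * (n : ℝ) + t : ℝ) : ℂ) = a + t := by push_cast; ring
  simp only [hc]
  refine ⟨a + t, a - t, g, by simpa using by linarith, ?_, ?_, ?_⟩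
  · rw [show a - t - (a + t) = -((2 * t : ℝ) : ℂ) by push_cast; ring, norm_neg,
      Complex.norm_real, Real.norm_of_nonneg (by linarith)]
    linarith
  · have hg : Differentiable ℂ g := by
      simp only [g]
      fun_prop
    exact fun ξ _ => hg.analyticAt ξ
  · intro ξ hξ
    have h₁ : ‖ξ - a - t‖ < 2 * π := by rw [sub_sub]; linarith
    have h₂ : ‖ξ - a + t‖ < 2 * π :=
      calc ‖ξ - a + t‖ = ‖(ξ - (a + t)) + ((2 * t : ℝ) : ℂ)‖ := by push_cast; ring_nf
        _ ≤ ‖ξ - (a + t)‖ + 2 * t := by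
          grw [norm_add_le, Complex.norm_real, Real.norm_of_nonneg (by linarith)]
        _ < 2 * π := by linarith
    refine ⟨by simp [g, sinHalfDiv_ne_zero h₁, sinHalfDiv_ne_zero h₂], ?_⟩
    rw [← Complex.cos_sub_nat_mul_two_pi ξ n, cos_sub_cos_eq_mul_sinHalfDiv]
    ring

/-- For 0 < ρ < π/4, 0 ≤ t ≤ ρ, t ≤ π and n ≥ 1, the equation cos ξ = cos t has exactly
2 roots (with multiplicity) inside the circle |ξ − (2πn + t)| = 3ρ: the function
cos ξ − cos t factors as (ξ − z₁)(ξ − z₂)·g(ξ) with g analytic and nonvanishing there. -/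
theorem stmt_3 (ρ t : ℝ) (hρ0 : 0 < ρ) (hρ : ρ < π / 4) (ht0 : 0 ≤ t) (htρ : t ≤ ρ)
    (htπ : t ≤ π) (n : ℕ) (hn : 1 ≤ n) :
    ∃ z₁ z₂ : ℂ, ∃ g : ℂ → ℂ,
      ‖z₁ - ((2 * π * (n : ℝ) + t : ℝ) : ℂ)‖ < 3 * ρ ∧
      ‖z₂ - ((2 * π * (n : ℝ) + t : ℝ) : ℂ)‖ < 3 * ρ ∧
      AnalyticOnNhd ℂ g {ξ : ℂ | ‖ξ - ((2 * π * (n : ℝ) + t : ℝ) : ℂ)‖ < 3 * ρ} ∧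
      ∀ ξ : ℂ, ‖ξ - ((2 * π * (n : ℝ) + t : ℝ) : ℂ)‖ < 3 * ρ →
        g ξ ≠ 0 ∧
        Complex.cos ξ - Complex.cos ((t : ℝ) : ℂ) = (ξ - z₁) * (ξ - z₂) * g ξ :=
  stmt_3_general ρ t hρ0 hρ ht0 htρ n
end

section
/- Suppose λ is a complex number with |λ − (2πn + t)²| < 15πnρ, where t ∈ [0, ρ], ρ is sufficiently small, and n is a sufficiently large positive integer. Then for every integer k with k ≠ 0 and k ≠ 2n, |λ − (2π(n−k) + t)²| > |k|·|2n − k|. -/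
/-!
Write `a = (2πn + t)²`, `b = (2π(n - k) + t)²` and `m = 2n - k`. Then
`a - b = 2πk (2πm + 2t)`, and since `m` is a nonzero integer and `t` is small,
`|a - b| ≥ 8π |k| |m|`. On the other hand `k + m = 2n` with `k, m` nonzero integers
gives `n ≤ |k| |m|`, so `|λ - a| < 15πnρ ≤ (15π/4) |k| |m|` once `ρ ≤ 1/4`.
The triangle inequality leaves `|λ - b| > (17π/4) |k| |m| ≥ |k| |m|`.
-/

open Real

theorem Int.abs_add_abs_le_two_mul_abs_mul {a b : ℤ} (ha : a ≠ 0) (hb : b ≠ 0) :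
    |a| + |b| ≤ 2 * (|a| * |b|) := by
  nlinarith [Int.one_le_abs ha, Int.one_le_abs hb]

theorem le_abs_mul_abs_of_add_eq_two_mul {k m n : ℤ} (hk : k ≠ 0) (hm : m ≠ 0)
    (hsum : k + m = 2 * n) : n ≤ |k| * |m| := by
  have htri := abs_add_le k m
  have hsum_le := Int.abs_add_abs_le_two_mul_abs_mul hk hm
  have hself := le_abs_self (k + m)
  omega

theorem four_mul_abs_le_abs_two_pi_mul_add {m : ℤ} (hm : m ≠ 0) {s : ℝ} (hs : |s| ≤ 1 / 2) :
    4 * |(m : ℝ)| ≤ |2 * π * m + s| := by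
  have hm1 : (1 : ℝ) ≤ |(m : ℝ)| := by exact_mod_cast Int.one_le_abs hm
  have hlin : |2 * π * (m : ℝ)| = 2 * π * |(m : ℝ)| := by
    rw [abs_mul, abs_of_pos (by positivity)]
  calc 4 * |(m : ℝ)| ≤ 2 * π * |(m : ℝ)| - |s| := by nlinarith [pi_gt_three]
    _ = |2 * π * m| - |-s| := by rw [hlin, abs_neg]
    _ ≤ |2 * π * m - -s| := abs_sub_abs_le_abs_sub _ _
    _ = |2 * π * m + s| := by rw [sub_neg_eq_add]

theorem sq_two_pi_mul_add_sub_sq (n k t : ℝ) :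
    (2 * π * n + t) ^ 2 - (2 * π * (n - k) + t) ^ 2 = 2 * π * k * (2 * π * (2 * n - k) + 2 * t) := by
  ring

theorem abs_sub_le_norm_sub_add_norm_sub (a b : ℝ) (z : ℂ) :
    |a - b| ≤ ‖z - a‖ + ‖z - b‖ := by
  rw [← Real.norm_eq_abs, ← Complex.norm_real, Complex.ofReal_sub, norm_sub_rev z]
  exact norm_sub_le_norm_sub_add_norm_sub _ _ _

/-- Inequality (22)/(59): for sufficiently small ρ and sufficiently large n, if
|λ − (2πn + t)²| < 15πnρ with t ∈ [0, ρ], then for every integer k ≠ 0, 2n,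
|λ − (2π(n−k) + t)²| > |k|·|2n − k|. -/
theorem stmt_4 :
    ∃ ρ₀ : ℝ, 0 < ρ₀ ∧ ∃ N : ℕ, ∀ ρ : ℝ, 0 < ρ → ρ ≤ ρ₀ →
      ∀ n : ℕ, N ≤ n → ∀ t : ℝ, 0 ≤ t → t ≤ ρ →
        ∀ lam : ℂ, ‖lam - (((2 * π * (n : ℝ) + t) ^ 2 : ℝ) : ℂ)‖ < 15 * π * n * ρ →
          ∀ k : ℤ, k ≠ 0 → k ≠ 2 * (n : ℤ) →
            (|(k : ℝ)| * |2 * (n : ℝ) - (k : ℝ)|) <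
              ‖lam - (((2 * π * ((n : ℝ) - (k : ℝ)) + t) ^ 2 : ℝ) : ℂ)‖ := by
  refine ⟨1 / 4, by norm_num, 0, ?_⟩
  intro ρ _ hρ n _ t ht0 htρ lam hlam k hk hk2n
  have hm : 2 * (n : ℤ) - k ≠ 0 := sub_ne_zero.mpr hk2n.symm
  set P : ℝ := |(k : ℝ)| * |2 * (n : ℝ) - (k : ℝ)|
  have hP : 1 ≤ P := by
    have h := Int.one_le_abs (mul_ne_zero hk hm)
    simpa [P, abs_mul] using (show (1 : ℝ) ≤ ((|k * (2 * n - k)| : ℤ) : ℝ) by exact_mod_cast h)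
  have hnP : (n : ℝ) ≤ P := by
    have h := le_abs_mul_abs_of_add_eq_two_mul hk hm (by ring : k + (2 * n - k) = 2 * (n : ℤ))
    simpa [P] using (show ((n : ℤ) : ℝ) ≤ ((|k| * |2 * n - k| : ℤ) : ℝ) by exact_mod_cast h)
  have hgap : 8 * π * P ≤ |(2 * π * n + t) ^ 2 - (2 * π * (n - k) + t) ^ 2| := by
    have h4 := four_mul_abs_le_abs_two_pi_mul_add hm (s := 2 * t)
      (by rw [abs_of_nonneg (by positivity)]; linarith)
    rw [sq_two_pi_mul_add_sub_sq, abs_mul, abs_mul, abs_of_pos (by positivity : 0 < 2 * π)]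
    push_cast at h4
    calc 8 * π * P = 2 * π * |(k : ℝ)| * (4 * |2 * (n : ℝ) - k|) := by ring
      _ ≤ _ := by gcongr
  have hnear : 15 * π * n * ρ ≤ 15 * π / 4 * P :=
    calc 15 * π * n * ρ ≤ 15 * π * n * (1 / 4) := by gcongr
      _ = 15 * π / 4 * n := by ring
      _ ≤ 15 * π / 4 * P := by gcongr
  have htri := abs_sub_le_norm_sub_add_norm_sub ((2 * π * n + t) ^ 2) ((2 * π * (n - k) + t) ^ 2) lam
  calc P < 8 * π * P - 15 * π / 4 * P := by nlinarith [pi_gt_three]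
    _ < _ := by linarith
end

section
/- Let a, b ∈ ℂ and suppose either Re(ab) ≥ 0, or |Im(ab)| ≥ ε|ab| for some ε ∈ (0,1]. Then for every real r ≥ 0, |ab + r²| ≥ (ε/3)(|ab| + r²). -/
/-!
Write `z = ab` and `s = r²`. Adding the nonnegative real `s` does not change `Im z`, and
`|z + s| ≥ s - |z|`. If `Re z ≥ 0`, then `|z + s|² ≥ |z|² + s² ≥ (|z| + s)² / 2`. Otherwise
`|z + s| ≥ |Im z| ≥ ε|z|`, which suffices when `s ≤ 2|z|`, while for `s > 2|z|` the bound
`|z + s| ≥ s - |z| ≥ (|z| + s) / 3` does.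
-/

namespace Complex

lemma abs_im_le_norm_add_ofReal (z : ℂ) (x : ℝ) : |z.im| ≤ ‖z + x‖ := by
  simpa using abs_im_le_norm (z + x)

lemma sub_norm_le_norm_add_ofReal (z : ℂ) {s : ℝ} (hs : 0 ≤ s) : s - ‖z‖ ≤ ‖z + s‖ := by
  simpa [norm_real, abs_of_nonneg hs, add_comm] using norm_sub_norm_le (s : ℂ) (-z)

lemma norm_sq_add_sq_le_norm_add_ofReal_sq {z : ℂ} (hz : 0 ≤ z.re) {s : ℝ} (hs : 0 ≤ s) :
    ‖z‖ ^ 2 + s ^ 2 ≤ ‖z + s‖ ^ 2 := by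
  simp only [← normSq_eq_norm_sq, normSq_apply, add_re, add_im, ofReal_re, ofReal_im, add_zero]
  nlinarith [mul_nonneg hz hs]

lemma norm_add_div_three_le_norm_add_ofReal_of_re_nonneg {z : ℂ} (hz : 0 ≤ z.re) {s : ℝ}
    (hs : 0 ≤ s) :
    (‖z‖ + s) / 3 ≤ ‖z + s‖ := by
  have hsq := norm_sq_add_sq_le_norm_add_ofReal_sq hz hs
  nlinarith [sq_nonneg (‖z‖ - s), norm_nonneg z, norm_nonneg (z + s)]

lemma mul_norm_add_div_three_le_norm_add_ofReal_of_mul_norm_le_abs_im {z : ℂ} {ε : ℝ}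
    (hε : 0 ≤ ε) (hε1 : ε ≤ 1) (hz : ε * ‖z‖ ≤ |z.im|) {s : ℝ} (hs : 0 ≤ s) :
    ε / 3 * (‖z‖ + s) ≤ ‖z + s‖ := by
  have him := abs_im_le_norm_add_ofReal z s
  have hsub := sub_norm_le_norm_add_ofReal z hs
  rcases le_or_gt s (2 * ‖z‖) with hsmall | hlarge
  · nlinarith [mul_le_mul_of_nonneg_left hsmall hε]
  · nlinarith [mul_le_mul_of_nonneg_right hε1 (add_nonneg (norm_nonneg z) hs)]

lemma div_three_mul_le_norm_add_ofReal {z : ℂ} {ε : ℝ} (hε0 : 0 ≤ ε) (hε1 : ε ≤ 1)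
    (hz : 0 ≤ z.re ∨ ε * ‖z‖ ≤ |z.im|) {s : ℝ} (hs : 0 ≤ s) :
    ε / 3 * (‖z‖ + s) ≤ ‖z + s‖ := by
  rcases hz with hre | him
  · calc ε / 3 * (‖z‖ + s) ≤ 1 / 3 * (‖z‖ + s) := by gcongr
      _ ≤ ‖z + s‖ := by linarith [norm_add_div_three_le_norm_add_ofReal_of_re_nonneg hre hs]
  · exact mul_norm_add_div_three_le_norm_add_ofReal_of_mul_norm_le_abs_im hε0 hε1 him hs

end Complex

theorem stmt_7_general (a b : ℂ) (ε : ℝ) (hε0 : 0 < ε) (hε1 : ε ≤ 1)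
    (h : 0 ≤ (a * b).re ∨ ε * ‖a * b‖ ≤ |(a * b).im|)
    (r : ℝ) :
    (ε / 3) * (‖a * b‖ + r ^ 2) ≤ ‖a * b + ((r ^ 2 : ℝ) : ℂ)‖ :=
  Complex.div_three_mul_le_norm_add_ofReal hε0.le hε1 h (sq_nonneg r)

/-- Inequality (69): if Re(ab) ≥ 0 or |Im(ab)| ≥ ε|ab| with ε ∈ (0,1], then for every
real r ≥ 0, |ab + r²| ≥ (ε/3)(|ab| + r²). -/
theorem stmt_7 (a b : ℂ) (ε : ℝ) (hε0 : 0 < ε) (hε1 : ε ≤ 1)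
    (h : 0 ≤ (a * b).re ∨ ε * ‖a * b‖ ≤ |(a * b).im|)
    (r : ℝ) (hr : 0 ≤ r) :
    (ε / 3) * (‖a * b‖ + r ^ 2) ≤ ‖a * b + ((r ^ 2 : ℝ) : ℂ)‖ :=
  stmt_7_general a b ε hε0 hε1 h r
end

section
/- Let H be a Hilbert space, (Ψ_n) a family of unit vectors in H indexed by n ∈ J (J finite), (Ψ*_n) vectors with sup over unit f of ∑_{n∈J} |⟨f, Ψ*_n⟩|² ≤ c₈, scalars α_n with |α_n|⁻¹ ≤ d, vectors h_n with ‖h_n‖ ≤ C·(ln|n|)/|n|, and suppose the vectors e_n = Ψ_n − u_n φ_n⁺ − v_n φ_n⁻ = h_n where (φ_n⁺)_{n∈J} and (φ_n⁻)_{n∈J} are two orthonormal families and |u_n|, |v_n| ≤ 2. Then the operator e(f) = ∑_{n∈J} α_n⁻¹ ⟨f, Ψ*_n⟩ Ψ_n satisfies ‖e‖ ≤ c₉ for a constant c₉ depending only on c₈, d, C (not on J). -/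
/-!
Write `e f = ∑ βₙ Ψₙ` with `βₙ = αₙ⁻¹ ⟨f, Ψ*ₙ⟩`; the Bessel-type bound and `|αₙ|⁻¹ ≤ d` give
`‖β‖_{ℓ²} ≤ |d| √c₈ ‖f‖`. Substituting `Ψₙ = uₙ φₙ⁺ + vₙ φₙ⁻ + hₙ`, the two orthonormal parts
have norm at most `2 ‖β‖_{ℓ²}` each by Pythagoras, and the remainder is at most
`‖β‖_{ℓ²} (∑ ‖hₙ‖²)^{1/2}` by Cauchy–Schwarz. Since `∑ (ln |n| / |n|)²` converges over `ℤ`,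
the last factor is bounded independently of `J`.
-/

open Real Filter Asymptotics ComplexConjugate

theorem isLittleO_log_div_self_sq_rpow :
    (fun x : ℝ => (log x / x) ^ 2) =o[atTop] fun x => x ^ (-(3 / 2 : ℝ)) := by
  have h := ((isLittleO_log_rpow_atTop (r := 1 / 4) (by norm_num)).mul_isBigO
    (isBigO_refl (fun x : ℝ => x⁻¹) atTop)).pow two_pos
  refine (h.congr_left fun x => by rw [div_eq_mul_inv]).congr' EventuallyEq.rfl ?_
  filter_upwards [eventually_gt_atTop 0] with x hx
  rw [← rpow_neg_one, ← rpow_add hx, ← rpow_natCast, ← rpow_mul hx.le]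
  norm_num

theorem summable_log_abs_div_abs_sq_int :
    Summable fun n : ℤ => (log |(n : ℝ)| / |(n : ℝ)|) ^ 2 :=
  summable_of_isBigO (summable_abs_int_rpow (b := 3 / 2) (by norm_num))
    (isLittleO_log_div_self_sq_rpow.isBigO.comp_tendsto
      ((tendsto_norm_cocompact_atTop (E := ℝ)).comp Int.tendsto_coe_cofinite))

section

variable {𝕜 E ι : Type*} [RCLike 𝕜] [NormedAddCommGroup E] [InnerProductSpace 𝕜 E]

theorem Orthonormal.norm_sum_smul_finset {v : ι → E} {J : Finset ι}
    (hv : Orthonormal 𝕜 fun n : J => v n) (c : ι → 𝕜) :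
    ‖∑ n ∈ J, c n • v n‖ = √(∑ n ∈ J, ‖c n‖ ^ 2) := by
  have hinner := hv.inner_sum (fun n => c n) (fun n => c n) Finset.univ
  rw [Finset.sum_coe_sort J (fun n => c n • v n),
    Finset.sum_coe_sort J (fun n => conj (c n) * c n)] at hinner
  rw [← sqrt_sq (norm_nonneg _), @norm_sq_eq_re_inner 𝕜, hinner, map_sum]
  congr 1
  refine Finset.sum_congr rfl fun n _ => ?_
  rw [RCLike.conj_mul]
  norm_cast

theorem Orthonormal.norm_sum_mul_smul_le {v : ι → E} {J : Finset ι}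
    (hv : Orthonormal 𝕜 fun n : J => v n) {u : ι → 𝕜} {a : ℝ} (ha : 0 ≤ a)
    (hu : ∀ n ∈ J, ‖u n‖ ≤ a) (β : ι → 𝕜) :
    ‖∑ n ∈ J, (β n * u n) • v n‖ ≤ a * √(∑ n ∈ J, ‖β n‖ ^ 2) := by
  rw [hv.norm_sum_smul_finset, ← sqrt_sq ha, ← sqrt_mul (sq_nonneg a), Finset.mul_sum]
  gcongr with n hn
  rw [norm_mul, mul_pow, mul_comm]
  gcongr
  exact hu n hn

theorem norm_sum_smul_le_sqrt_mul_sqrt (J : Finset ι) (β : ι → 𝕜) (h : ι → E) :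
    ‖∑ n ∈ J, β n • h n‖ ≤ √(∑ n ∈ J, ‖β n‖ ^ 2) * √(∑ n ∈ J, ‖h n‖ ^ 2) :=
  calc ‖∑ n ∈ J, β n • h n‖ ≤ ∑ n ∈ J, ‖β n‖ * ‖h n‖ := by
        simpa only [norm_smul] using norm_sum_le J fun n => β n • h n
    _ ≤ _ := sum_mul_le_sqrt_mul_sqrt J _ _

theorem norm_sum_smul_le_of_sub_eq {J : Finset ι} {Ψ φp φm h : ι → E} {u v : ι → 𝕜} {a : ℝ}
    (hφp : Orthonormal 𝕜 fun n : J => φp n) (hφm : Orthonormal 𝕜 fun n : J => φm n)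
    (ha : 0 ≤ a) (huv : ∀ n ∈ J, ‖u n‖ ≤ a ∧ ‖v n‖ ≤ a)
    (hΨ : ∀ n ∈ J, Ψ n - u n • φp n - v n • φm n = h n) (β : ι → 𝕜) :
    ‖∑ n ∈ J, β n • Ψ n‖ ≤ (2 * a + √(∑ n ∈ J, ‖h n‖ ^ 2)) * √(∑ n ∈ J, ‖β n‖ ^ 2) := by
  have hsplit : ∑ n ∈ J, β n • Ψ n = ∑ n ∈ J, (β n * u n) • φp n
      + ∑ n ∈ J, (β n * v n) • φm n + ∑ n ∈ J, β n • h n := by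
    simp only [← Finset.sum_add_distrib, mul_smul, ← smul_add]
    refine Finset.sum_congr rfl fun n hn => ?_
    rw [← hΨ n hn]
    abel_nf
  rw [hsplit]
  calc _ ≤ ‖∑ n ∈ J, (β n * u n) • φp n‖ + ‖∑ n ∈ J, (β n * v n) • φm n‖
        + ‖∑ n ∈ J, β n • h n‖ := norm_add₃_le
    _ ≤ a * √(∑ n ∈ J, ‖β n‖ ^ 2) + a * √(∑ n ∈ J, ‖β n‖ ^ 2)
        + √(∑ n ∈ J, ‖β n‖ ^ 2) * √(∑ n ∈ J, ‖h n‖ ^ 2) := by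
      gcongr
      · exact hφp.norm_sum_mul_smul_le ha (fun n hn => (huv n hn).1) β
      · exact hφm.norm_sum_mul_smul_le ha (fun n hn => (huv n hn).2) β
      · exact norm_sum_smul_le_sqrt_mul_sqrt J β h
    _ = _ := by ring

theorem sum_norm_inner_sq_le_of_norm_eq_one {J : Finset ι} {g : ι → E} {c : ℝ}
    (hB : ∀ f : E, ‖f‖ = 1 → ∑ n ∈ J, ‖(inner 𝕜 f (g n) : 𝕜)‖ ^ 2 ≤ c) (f : E) :
    ∑ n ∈ J, ‖(inner 𝕜 f (g n) : 𝕜)‖ ^ 2 ≤ c * ‖f‖ ^ 2 := by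
  rcases eq_or_ne f 0 with rfl | hf
  · simp
  have hf' : 0 < ‖f‖ := norm_pos_iff.mpr hf
  have hunit := hB ((‖f‖⁻¹ : 𝕜) • f) (norm_smul_inv_norm hf)
  simp only [inner_smul_left, norm_mul, RCLike.norm_conj, norm_inv, RCLike.norm_ofReal,
    abs_norm, mul_pow, ← Finset.mul_sum] at hunit
  rwa [inv_pow, inv_mul_le_iff₀ (by positivity), mul_comm] at hunit

theorem sqrt_sum_norm_mul_inner_sq_le {J : Finset ι} {g : ι → E} {a : ι → 𝕜} {c d : ℝ}
    (hB : ∀ f : E, ‖f‖ = 1 → ∑ n ∈ J, ‖(inner 𝕜 f (g n) : 𝕜)‖ ^ 2 ≤ c)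
    (ha : ∀ n ∈ J, ‖a n‖ ≤ d) (f : E) :
    √(∑ n ∈ J, ‖a n * (inner 𝕜 f (g n) : 𝕜)‖ ^ 2) ≤ |d| * √c * ‖f‖ := by
  have hsum : ∑ n ∈ J, ‖a n * (inner 𝕜 f (g n) : 𝕜)‖ ^ 2 ≤ d ^ 2 * (c * ‖f‖ ^ 2) :=
    calc _ ≤ ∑ n ∈ J, d ^ 2 * ‖(inner 𝕜 f (g n) : 𝕜)‖ ^ 2 := by
          gcongr with n hn
          rw [norm_mul, mul_pow]
          gcongr
          exact ha n hn
      _ ≤ _ := by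
          rw [← Finset.mul_sum]
          gcongr
          exact sum_norm_inner_sq_le_of_norm_eq_one hB f
  calc _ ≤ √(d ^ 2 * (c * ‖f‖ ^ 2)) := sqrt_le_sqrt hsum
    _ = _ := by rw [sqrt_mul (sq_nonneg d), sqrt_mul' _ (sq_nonneg _), sqrt_sq_eq_abs,
      sqrt_sq (norm_nonneg f), mul_assoc]

end

theorem sqrt_sum_norm_sq_le_of_norm_le_log_div {E : Type*} [NormedAddCommGroup E]
    (J : Finset ℤ) {h : ℤ → E} {C : ℝ}
    (hh : ∀ n ∈ J, ‖h n‖ ≤ C * log |(n : ℝ)| / |(n : ℝ)|) :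
    √(∑ n ∈ J, ‖h n‖ ^ 2) ≤ |C| * √(∑' n : ℤ, (log |(n : ℝ)| / |(n : ℝ)|) ^ 2) := by
  have hsum : ∑ n ∈ J, ‖h n‖ ^ 2 ≤ C ^ 2 * ∑' n : ℤ, (log |(n : ℝ)| / |(n : ℝ)|) ^ 2 :=
    calc _ ≤ ∑ n ∈ J, C ^ 2 * (log |(n : ℝ)| / |(n : ℝ)|) ^ 2 := by
          gcongr with n hn
          rw [← mul_pow, ← mul_div_assoc]
          exact pow_le_pow_left₀ (norm_nonneg _) (hh n hn) 2
      _ ≤ _ := by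
          rw [← Finset.mul_sum]
          gcongr
          exact summable_log_abs_div_abs_sq_int.sum_le_tsum J fun n _ => sq_nonneg _
  calc _ ≤ _ := sqrt_le_sqrt hsum
    _ = _ := by rw [sqrt_mul (sq_nonneg C), sqrt_sq_eq_abs]

theorem stmt_19_general (c₈ d C : ℝ) :
    ∃ c₉ : ℝ, ∀ (H : Type) (_ : NormedAddCommGroup H),
      ∀ (_ : InnerProductSpace ℂ H) (J : Finset ℤ)
        (Ψ Ψs h φp φm : ℤ → H) (u v α : ℤ → ℂ),
        (∀ n ∈ J, ‖Ψ n‖ = 1) →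
        (∀ f : H, ‖f‖ = 1 → ∑ n ∈ J, ‖(inner ℂ f (Ψs n) : ℂ)‖ ^ 2 ≤ c₈) →
        (∀ n ∈ J, α n ≠ 0 ∧ ‖(α n)⁻¹‖ ≤ d) →
        (∀ n ∈ J, ‖h n‖ ≤ C * Real.log |(n : ℝ)| / |(n : ℝ)|) →
        Orthonormal ℂ (fun n : J => φp (n : ℤ)) →
        Orthonormal ℂ (fun n : J => φm (n : ℤ)) →
        (∀ n ∈ J, ‖u n‖ ≤ 2 ∧ ‖v n‖ ≤ 2) →
        (∀ n ∈ J, Ψ n - u n • φp n - v n • φm n = h n) →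
        ∀ f : H, ‖∑ n ∈ J, ((α n)⁻¹ * (inner ℂ f (Ψs n) : ℂ)) • Ψ n‖ ≤ c₉ * ‖f‖ := by
  refine ⟨(4 + |C| * √(∑' n : ℤ, (log |(n : ℝ)| / |(n : ℝ)|) ^ 2)) * (|d| * √c₈), ?_⟩
  intro H _ _ J Ψ Ψs h φp φm u v α _ hBessel hα hh hφp hφm huv hΨ f
  calc _ ≤ (2 * 2 + √(∑ n ∈ J, ‖h n‖ ^ 2))
          * √(∑ n ∈ J, ‖(α n)⁻¹ * (inner ℂ f (Ψs n) : ℂ)‖ ^ 2) :=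
        norm_sum_smul_le_of_sub_eq hφp hφm zero_le_two huv hΨ _
    _ ≤ (4 + |C| * √(∑' n : ℤ, (log |(n : ℝ)| / |(n : ℝ)|) ^ 2)) * (|d| * √c₈ * ‖f‖) := by
        gcongr
        · norm_num
        · exact sqrt_sum_norm_sq_le_of_norm_le_log_div J hh
        · exact sqrt_sum_norm_mul_inner_sq_le hBessel (fun n hn => (hα n hn).2) f
    _ = _ := by ring

/-- Abstract content of Theorem 7: the projections e(f) = ∑_{n∈J} α_n⁻¹⟨f,Ψ*_n⟩Ψ_n are
bounded by a constant c₉ depending only on c₈, d, C (not on the finite index set J). -/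
theorem stmt_19 (c₈ d C : ℝ) (hc₈ : 0 ≤ c₈) (hd : 0 ≤ d) (hC : 0 ≤ C) :
    ∃ c₉ : ℝ, ∀ (H : Type) (_ : NormedAddCommGroup H),
      ∀ (_ : InnerProductSpace ℂ H) (J : Finset ℤ)
        (Ψ Ψs h φp φm : ℤ → H) (u v α : ℤ → ℂ),
        (∀ n ∈ J, ‖Ψ n‖ = 1) →
        (∀ f : H, ‖f‖ = 1 → ∑ n ∈ J, ‖(inner ℂ f (Ψs n) : ℂ)‖ ^ 2 ≤ c₈) →
        (∀ n ∈ J, α n ≠ 0 ∧ ‖(α n)⁻¹‖ ≤ d) →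
        (∀ n ∈ J, ‖h n‖ ≤ C * Real.log |(n : ℝ)| / |(n : ℝ)|) →
        Orthonormal ℂ (fun n : J => φp (n : ℤ)) →
        Orthonormal ℂ (fun n : J => φm (n : ℤ)) →
        (∀ n ∈ J, ‖u n‖ ≤ 2 ∧ ‖v n‖ ≤ 2) →
        (∀ n ∈ J, Ψ n - u n • φp n - v n • φm n = h n) →
        ∀ f : H, ‖∑ n ∈ J, ((α n)⁻¹ * (inner ℂ f (Ψs n) : ℂ)) • Ψ n‖ ≤ c₉ * ‖f‖ :=
  stmt_19_general c₈ d C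
end
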